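/- For a pfo-formula φ, define the potential p(φ) = Σ_F a(F)², where the sum ranges over all subformula occurrences F of φ whose root is labeled by a quantification, and a(F) denotes the number of atoms in F. Then: (1) applying any of the rules A, C, O to a pfo-formula leaves p unchanged; (2) applying any of the rules P↓, S↓, M to a pfo-formula strictly decreases p; and (3) p(φ) ≤ |φ|³, where |φ| is the number of nodes of the syntax tree of φ. -/
import Mathlib


namespace WidthPaper

/-- Positive (relational) first-order formulas: atoms `R(v₁,…,vₖ)` (relation symbol
coded by a natural number, arguments a list of variables), binary `∧`, binary `∨`,
and quantifications `∃x`, `∀x`. -/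
inductive PFO : Type where
  | atom : ℕ → List ℕ → PFO
  | conj : PFO → PFO → PFO
  | disj : PFO → PFO → PFO
  | ex   : ℕ → PFO → PFO
  | all  : ℕ → PFO → PFO
  deriving DecidableEq

namespace PFO

/-- Free variables of a pfo-formula. -/
def free : PFO → Finset ℕ
  | .atom _ vs => vs.toFinset
  | .conj f g => free f ∪ free g
  | .disj f g => free f ∪ free g
  | .ex x f => free f \ {x}
  | .all x f => free f \ {x}

/-- Replace every free occurrence of `x` by `y`. -/
def rename (x y : ℕ) : PFO → PFO
  | .atom r vs => .atom r (vs.map fun v => if v = x then y else v)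
  | .conj f g => .conj (rename x y f) (rename x y g)
  | .disj f g => .disj (rename x y f) (rename x y g)
  | .ex z f => if z = x then .ex z f else .ex z (rename x y f)
  | .all z f => if z = x then .all z f else .all z (rename x y f)

/-- Associativity rule (at the root). -/
inductive RA : PFO → PFO → Prop
  | conj1 (f g h : PFO) : RA (.conj f (.conj g h)) (.conj (.conj f g) h)
  | conj2 (f g h : PFO) : RA (.conj (.conj f g) h) (.conj f (.conj g h))
  | disj1 (f g h : PFO) : RA (.disj f (.disj g h)) (.disj (.disj f g) h)
  | disj2 (f g h : PFO) : RA (.disj (.disj f g) h) (.disj f (.disj g h))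

/-- Commutativity rule (at the root). -/
inductive RC : PFO → PFO → Prop
  | conj (f g : PFO) : RC (.conj f g) (.conj g f)
  | disj (f g : PFO) : RC (.disj f g) (.disj g f)

/-- Reordering rule (at the root): `QxQyF → QyQxF`. -/
inductive RO : PFO → PFO → Prop
  | ex (x y : ℕ) (f : PFO) : RO (.ex x (.ex y f)) (.ex y (.ex x f))
  | all (x y : ℕ) (f : PFO) : RO (.all x (.all y f)) (.all y (.all x f))

/-- Pushdown rule (at the root). -/
inductive RPd : PFO → PFO → Prop
  | ex (x : ℕ) (f g : PFO) : x ∉ free g → RPd (.ex x (.conj f g)) (.conj (.ex x f) g)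
  | all (x : ℕ) (f g : PFO) : x ∉ free g → RPd (.all x (.disj f g)) (.disj (.all x f) g)

/-- Pushup rule: the inverse of pushdown. -/
def RPu : PFO → PFO → Prop := fun f g => RPd g f

/-- Renaming rule (at the root). -/
inductive RN : PFO → PFO → Prop
  | ex (x y : ℕ) (f : PFO) : y ∉ free f → RN (.ex x f) (.ex y (rename x y f))
  | all (x y : ℕ) (f : PFO) : y ∉ free f → RN (.all x f) (.all y (rename x y f))

/-- Splitdown rule (at the root). -/
inductive RSd : PFO → PFO → Prop
  | ex (x : ℕ) (f g : PFO) : RSd (.ex x (.disj f g)) (.disj (.ex x f) (.ex x g))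
  | all (x : ℕ) (f g : PFO) : RSd (.all x (.conj f g)) (.conj (.all x f) (.all x g))

/-- Splitup rule: the inverse of splitdown. -/
def RSu : PFO → PFO → Prop := fun f g => RSd g f

/-- Removal rule (at the root). -/
inductive RM : PFO → PFO → Prop
  | ex (x : ℕ) (f : PFO) : x ∉ free f → RM (.ex x f) f
  | all (x : ℕ) (f : PFO) : x ∉ free f → RM (.all x f) f

/-- Closure of a root rewriting relation under application at any subformula position. -/
inductive Step (r : PFO → PFO → Prop) : PFO → PFO → Prop
  | root {f g} : r f g → Step r f g
  | conjL {f f' g} : Step r f f' → Step r (.conj f g) (.conj f' g)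
  | conjR {f g g'} : Step r g g' → Step r (.conj f g) (.conj f g')
  | disjL {f f' g} : Step r f f' → Step r (.disj f g) (.disj f' g)
  | disjR {f g g'} : Step r g g' → Step r (.disj f g) (.disj f g')
  | exC {x f f'} : Step r f f' → Step r (.ex x f) (.ex x f')
  | allC {x f f'} : Step r f f' → Step r (.all x f) (.all x f')

/-- Union of the root rules in ACO = {A, C, O}. -/
def rACO : PFO → PFO → Prop := fun f g => RA f g ∨ RC f g ∨ RO f g

/-- Union of the root rules in 𝒯 = {A, C, O, P↓, P↑, N}. -/
def rT : PFO → PFO → Prop := fun f g => rACO f g ∨ RPd f g ∨ RPu f g ∨ RN f g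

/-- Union of the root rules in 𝒯 ∖ {N} = {A, C, O, P↓, P↑}. -/
def rTnoN : PFO → PFO → Prop := fun f g => rACO f g ∨ RPd f g ∨ RPu f g

/-- Union of the root rules {P↓, S↓, M} (the reduction of the system Y). -/
def rY : PFO → PFO → Prop := fun f g => RPd f g ∨ RSd f g ∨ RM f g

/-- Union of the root rules {S↓, M} (the reduction of the system Y′). -/
def rYp : PFO → PFO → Prop := fun f g => RSd f g ∨ RM f g

/-- Union of all the root rules 𝒜 = 𝒯 ∪ {S↓, S↑, M}. -/
def rAll : PFO → PFO → Prop := fun f g => rT f g ∨ RSd f g ∨ RSu f g ∨ RM f g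

/-- The ↔*_R-equivalence class `[φ]_R` of `φ`, for the root-rule union `r`. -/
def eqvCls (r : PFO → PFO → Prop) (φ : PFO) : Set PFO :=
  {ψ | Relation.EqvGen (Step r) φ ψ}

/-- A rule (given by its root relation) is applicable to a formula if it can be applied
at some subformula position. -/
def Applicable (r : PFO → PFO → Prop) (φ : PFO) : Prop := ∃ ψ, Step r φ ψ

/-- A rule is applicable to a set of formulas if it is applicable to some member. -/
def ApplicableSet (r : PFO → PFO → Prop) (S : Set PFO) : Prop := ∃ φ ∈ S, Applicable r φ

/-- Number of nodes of the syntax tree. -/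
def size : PFO → ℕ
  | .atom _ _ => 1
  | .conj f g => size f + size g + 1
  | .disj f g => size f + size g + 1
  | .ex _ f => size f + 1
  | .all _ f => size f + 1

/-- List of all subformula occurrences. -/
def subformulas : PFO → List PFO
  | .atom r vs => [.atom r vs]
  | .conj f g => .conj f g :: (subformulas f ++ subformulas g)
  | .disj f g => .disj f g :: (subformulas f ++ subformulas g)
  | .ex x f => .ex x f :: subformulas f
  | .all x f => .all x f :: subformulas f

/-- The width of a formula: the maximum number of free variables over all subformulas. -/
def width (φ : PFO) : ℕ := ((subformulas φ).map fun ψ => (free ψ).card).foldr max 0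

/-- The width of a set of formulas: the minimum width over its members. -/
noncomputable def setWidth (S : Set PFO) : ℕ := sInf (width '' S)

/-- The setoid of ↔*_ACO-equivalence. -/
def acoSetoid : Setoid PFO := ⟨Relation.EqvGen (Step rACO), Relation.EqvGen.is_equivalence _⟩

/-- The setoid of ↔*_𝒯-equivalence. -/
def tSetoid : Setoid PFO := ⟨Relation.EqvGen (Step rT), Relation.EqvGen.is_equivalence _⟩

/-- The reduction of a quotient system `(PFO, Step r) / s`:  `C → C′` iff there are
`d ∈ C` and `d′ ∈ C′` with `Step r d d′`. -/
def qStep (s : Setoid PFO) (r : PFO → PFO → Prop) (C C' : Quotient s) : Prop :=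
  ∃ d d', C = Quotient.mk s d ∧ C' = Quotient.mk s d' ∧ Step r d d'

/-- The multiset of quantified-variable occurrences of a formula. -/
def quantVars : PFO → Multiset ℕ
  | .atom _ _ => 0
  | .conj f g => quantVars f + quantVars g
  | .disj f g => quantVars f + quantVars g
  | .ex x f => x ::ₘ quantVars f
  | .all x f => x ::ₘ quantVars f

/-- A formula is standardized if no variable is quantified at two different occurrences
and no quantified variable is free in the whole formula. -/
def Standardized (φ : PFO) : Prop :=
  (quantVars φ).Nodup ∧ ∀ x ∈ quantVars φ, x ∉ free φ

/-- A formula is pushed-down if the pushdown rule is not applicable to it. -/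
def PushedDown (φ : PFO) : Prop := ¬ Applicable RPd φ

/-- A set of formulas is pushed-down if each member is pushed-down. -/
def PushedDownSet (S : Set PFO) : Prop := ∀ φ ∈ S, PushedDown φ

/-- The multiset of conjuncts of a formula (collapsing the top `∧`-structure). -/
def conjuncts : PFO → Multiset PFO
  | .conj f g => conjuncts f + conjuncts g
  | .atom r vs => {PFO.atom r vs}
  | .disj f g => {PFO.disj f g}
  | .ex x f => {PFO.ex x f}
  | .all x f => {PFO.all x f}

/-- The multiset of disjuncts of a formula (collapsing the top `∨`-structure). -/
def disjuncts : PFO → Multiset PFO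
  | .disj f g => disjuncts f + disjuncts g
  | .atom r vs => {PFO.atom r vs}
  | .conj f g => {PFO.conj f g}
  | .ex x f => {PFO.ex x f}
  | .all x f => {PFO.all x f}

/-- Number of atoms of a formula. -/
def atomCount : PFO → ℕ
  | .atom _ _ => 1
  | .conj f g => atomCount f + atomCount g
  | .disj f g => atomCount f + atomCount g
  | .ex _ f => atomCount f
  | .all _ f => atomCount f

/-- `φ` is an atom. -/
def isAtom : PFO → Prop
  | .atom _ _ => True
  | _ => False

/-- The top operation of `φ` is `∃` or `∧`. -/
def topEA : PFO → Prop
  | .conj _ _ => True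
  | .ex _ _ => True
  | _ => False

/-- The top operation of `φ` is `∀` or `∨`. -/
def topAO : PFO → Prop
  | .disj _ _ => True
  | .all _ _ => True
  | _ => False

/-- `φ` is an {∃,∧}-formula (built from atoms using only `∧` and `∃`). -/
def isEAFormula : PFO → Prop
  | .atom _ _ => True
  | .conj f g => isEAFormula f ∧ isEAFormula g
  | .ex _ f => isEAFormula f
  | _ => False

end PFO

open PFO

/-- Holey pfo-formulas: leaves are natural-number holes. -/
inductive Holey : Type where
  | hole : ℕ → Holey
  | conj : Holey → Holey → Holey
  | disj : Holey → Holey → Holey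
  | ex   : ℕ → Holey → Holey
  | all  : ℕ → Holey → Holey
  deriving DecidableEq

namespace Holey

/-- The multiset of hole occurrences. -/
def holes : Holey → Multiset ℕ
  | .hole i => {i}
  | .conj f g => holes f + holes g
  | .disj f g => holes f + holes g
  | .ex _ f => holes f
  | .all _ f => holes f

/-- A holey {∃,∧}-formula: uses only holes, `∧` and `∃`. -/
def isEA : Holey → Prop
  | .hole _ => True
  | .conj f g => isEA f ∧ isEA g
  | .ex _ f => isEA f
  | _ => False

/-- A holey {∀,∨}-formula: uses only holes, `∨` and `∀`. -/
def isAO : Holey → Prop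
  | .hole _ => True
  | .disj f g => isAO f ∧ isAO g
  | .all _ f => isAO f
  | _ => False

/-- The holey formula is atomic (a single hole). -/
def isHole : Holey → Prop
  | .hole _ => True
  | _ => False

/-- Free variables of a holey formula under an association `a` for the holes. -/
def hfree (a : ℕ → Finset ℕ) : Holey → Finset ℕ
  | .hole i => a i
  | .conj f g => hfree a f ∪ hfree a g
  | .disj f g => hfree a f ∪ hfree a g
  | .ex x f => hfree a f \ {x}
  | .all x f => hfree a f \ {x}

/-- Associativity rule on holey formulas (at the root). -/
inductive HRA : Holey → Holey → Prop
  | conj1 (f g h : Holey) : HRA (.conj f (.conj g h)) (.conj (.conj f g) h)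
  | conj2 (f g h : Holey) : HRA (.conj (.conj f g) h) (.conj f (.conj g h))
  | disj1 (f g h : Holey) : HRA (.disj f (.disj g h)) (.disj (.disj f g) h)
  | disj2 (f g h : Holey) : HRA (.disj (.disj f g) h) (.disj f (.disj g h))

/-- Commutativity rule on holey formulas (at the root). -/
inductive HRC : Holey → Holey → Prop
  | conj (f g : Holey) : HRC (.conj f g) (.conj g f)
  | disj (f g : Holey) : HRC (.disj f g) (.disj g f)

/-- Reordering rule on holey formulas (at the root). -/
inductive HRO : Holey → Holey → Prop
  | ex (x y : ℕ) (f : Holey) : HRO (.ex x (.ex y f)) (.ex y (.ex x f))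
  | all (x y : ℕ) (f : Holey) : HRO (.all x (.all y f)) (.all y (.all x f))

/-- Pushdown rule on holey formulas under an association (at the root). -/
inductive HRPd (a : ℕ → Finset ℕ) : Holey → Holey → Prop
  | ex (x : ℕ) (f g : Holey) : x ∉ hfree a g →
      HRPd a (.ex x (.conj f g)) (.conj (.ex x f) g)
  | all (x : ℕ) (f g : Holey) : x ∉ hfree a g →
      HRPd a (.all x (.disj f g)) (.disj (.all x f) g)

/-- Union of the root rules 𝒯 ∖ {N} on holey formulas, under association `a`. -/
def hrTnoN (a : ℕ → Finset ℕ) : Holey → Holey → Prop :=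
  fun f g => HRA f g ∨ HRC f g ∨ HRO f g ∨ HRPd a f g ∨ HRPd a g f

/-- Closure of a root rewriting relation on holey formulas under application at
any subformula position. -/
inductive HStep (r : Holey → Holey → Prop) : Holey → Holey → Prop
  | root {f g} : r f g → HStep r f g
  | conjL {f f' g} : HStep r f f' → HStep r (.conj f g) (.conj f' g)
  | conjR {f g g'} : HStep r g g' → HStep r (.conj f g) (.conj f g')
  | disjL {f f' g} : HStep r f f' → HStep r (.disj f g) (.disj f' g)
  | disjR {f g g'} : HStep r g g' → HStep r (.disj f g) (.disj f g')
  | exC {x f f'} : HStep r f f' → HStep r (.ex x f) (.ex x f')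
  | allC {x f f'} : HStep r f f' → HStep r (.all x f) (.all x f')

/-- The equivalence class of a holey formula under ↔* of the rules 𝒯∖{N}
(under association `a`). -/
def hcls (a : ℕ → Finset ℕ) (φ : Holey) : Set Holey :=
  {ψ | Relation.EqvGen (HStep (hrTnoN a)) φ ψ}

/-- List of all holey subformula occurrences. -/
def hsubformulas : Holey → List Holey
  | .hole i => [.hole i]
  | .conj f g => .conj f g :: (hsubformulas f ++ hsubformulas g)
  | .disj f g => .disj f g :: (hsubformulas f ++ hsubformulas g)
  | .ex x f => .ex x f :: hsubformulas f
  | .all x f => .all x f :: hsubformulas f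

/-- Width of a holey formula under an association. -/
def hwidth (a : ℕ → Finset ℕ) (φ : Holey) : ℕ :=
  ((hsubformulas φ).map fun ψ => (hfree a ψ).card).foldr max 0

/-- Minimum width over a set of holey formulas. -/
noncomputable def setHWidth (a : ℕ → Finset ℕ) (S : Set Holey) : ℕ :=
  sInf ((hwidth a) '' S)

/-- The multiset of quantified-variable occurrences of a holey formula. -/
def hQuantVars : Holey → Multiset ℕ
  | .hole _ => 0
  | .conj f g => hQuantVars f + hQuantVars g
  | .disj f g => hQuantVars f + hQuantVars g
  | .ex x f => x ::ₘ hQuantVars f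
  | .all x f => x ::ₘ hQuantVars f

/-- A holey formula (with association `a`) is standardized. -/
def HStandardized (a : ℕ → Finset ℕ) (φ : Holey) : Prop :=
  (hQuantVars φ).Nodup ∧ ∀ x ∈ hQuantVars φ, x ∉ hfree a φ

/-- Subformula relation on holey formulas. -/
inductive HSub : Holey → Holey → Prop
  | refl (φ : Holey) : HSub φ φ
  | conjL {ψ f g} : HSub ψ f → HSub ψ (.conj f g)
  | conjR {ψ f g} : HSub ψ g → HSub ψ (.conj f g)
  | disjL {ψ f g} : HSub ψ f → HSub ψ (.disj f g)
  | disjR {ψ f g} : HSub ψ g → HSub ψ (.disj f g)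
  | exS {ψ x f} : HSub ψ f → HSub ψ (.ex x f)
  | allS {ψ x f} : HSub ψ f → HSub ψ (.all x f)

/-- The multiset of conjuncts of a holey formula. -/
def hconjuncts : Holey → Multiset Holey
  | .conj f g => hconjuncts f + hconjuncts g
  | .hole i => {Holey.hole i}
  | .disj f g => {Holey.disj f g}
  | .ex x f => {Holey.ex x f}
  | .all x f => {Holey.all x f}

end Holey

open Holey

/-- Substituting formulas for the holes of a holey formula:  `φ⟦ψ⟧`. -/
def substH (ψ : ℕ → PFO) : Holey → PFO
  | .hole i => ψ i
  | .conj f g => .conj (substH ψ f) (substH ψ g)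
  | .disj f g => .disj (substH ψ f) (substH ψ g)
  | .ex x f => .ex x (substH ψ f)
  | .all x f => .all x (substH ψ f)

mutual
/-- {∃,∧}-organized formulas. -/
inductive OrganizedEA : PFO → Prop
  | mk (h : Holey) (ψ : ℕ → PFO) :
      Holey.isEA h → ¬ Holey.isHole h → (Holey.holes h).Nodup →
      (∀ i ∈ Holey.holes h, ¬ PFO.isAtom (ψ i) → OrganizedAO (ψ i)) →
      OrganizedEA (substH ψ h)
/-- {∀,∨}-organized formulas. -/
inductive OrganizedAO : PFO → Prop
  | mk (h : Holey) (ψ : ℕ → PFO) :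
      Holey.isAO h → ¬ Holey.isHole h → (Holey.holes h).Nodup →
      (∀ i ∈ Holey.holes h, ¬ PFO.isAtom (ψ i) → OrganizedEA (ψ i)) →
      OrganizedAO (substH ψ h)
end

/-- Names for the rewriting rules. -/
inductive RuleName : Type where
  | A | C | O | Pd | Pu | N | Sd | Su | M
  deriving DecidableEq

/-- The one-step rewriting relation of a named rule (applied at any subformula position). -/
def ruleRel : RuleName → PFO → PFO → Prop
  | .A => Step RA
  | .C => Step RC
  | .O => Step RO
  | .Pd => Step RPd
  | .Pu => Step RPu
  | .N => Step RN
  | .Sd => Step RSd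
  | .Su => Step RSu
  | .M => Step RM

/-- `Chain φ L θ`: a rewriting sequence from `φ` to `θ` applying the rules named in `L`
in order. -/
inductive Chain : PFO → List RuleName → PFO → Prop
  | nil (φ : PFO) : Chain φ [] φ
  | cons {φ ψ θ : PFO} {r : RuleName} {rs : List RuleName} :
      ruleRel r φ ψ → Chain ψ rs θ → Chain φ (r :: rs) θ

/-- A tree decomposition of the hypergraph with vertex set `V` and edge set `E`. -/
structure TreeDecomp (V : Finset ℕ) (E : Finset (Finset ℕ)) : Type 1 where
  ι : Type
  fin : Fintype ι
  T : SimpleGraph ι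
  tree : T.IsTree
  bag : ι → Finset ℕ
  bag_sub : ∀ t, bag t ⊆ V
  vertCover : ∀ v ∈ V, ∃ t, v ∈ bag t
  edgeCover : ∀ e ∈ E, ∃ t, e ⊆ bag t
  conn : ∀ v ∈ V, (T.induce {t | v ∈ bag t}).Connected

/-- The bagsize of a tree decomposition: the maximum bag size. -/
def TreeDecomp.bagsize {V : Finset ℕ} {E : Finset (Finset ℕ)} (D : TreeDecomp V E) : ℕ :=
  letI := D.fin
  Finset.univ.sup fun t => (D.bag t).card

/-- The treewidth of the hypergraph `(V, E)` (as an integer): the minimum bagsize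
over all tree decompositions, minus one. -/
noncomputable def treewidth (V : Finset ℕ) (E : Finset (Finset ℕ)) : ℤ :=
  sInf {n : ℤ | ∃ D : TreeDecomp V E, (D.bagsize : ℤ) = n} - 1

/-- Vertex set of the hypergraph of a holey formula with association `a`. -/
def holeyVerts (a : ℕ → Finset ℕ) (φ : Holey) : Finset ℕ :=
  (Holey.holes φ).toFinset.sup a

/-- Edge set of the hypergraph of a holey formula with association `a`:
an edge `a i` per hole `i`, plus the edge of the free variables. -/
def holeyEdges (a : ℕ → Finset ℕ) (φ : Holey) : Finset (Finset ℕ) :=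
  ((Holey.holes φ).toFinset.image a) ∪ {hfree a φ}

/-- The edges of the hypergraph of a pfo-formula: one edge per atom. -/
def atomEdges : PFO → Finset (Finset ℕ)
  | .atom _ vs => {vs.toFinset}
  | .conj f g => atomEdges f ∪ atomEdges g
  | .disj f g => atomEdges f ∪ atomEdges g
  | .ex _ f => atomEdges f
  | .all _ f => atomEdges f

/-- The vertices of the hypergraph of a pfo-formula: all variables of its atoms. -/
def atomVerts (φ : PFO) : Finset ℕ := (atomEdges φ).sup id

/-- The potential of a formula: the sum, over all subformula occurrences rooted at
a quantification, of the square of the number of atoms. -/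
def pot : PFO → ℕ
  | .atom _ _ => 0
  | .conj f g => pot f + pot g
  | .disj f g => pot f + pot g
  | .ex x f => atomCount (.ex x f) ^ 2 + pot f
  | .all x f => atomCount (.all x f) ^ 2 + pot f

/-- `⋈_x`: remove from a multiset of variable-sets all sets containing `x`, and add the
set obtained as the union of the removed sets with `x` deleted. -/
def joinVar (x : ℕ) (S : Multiset (Finset ℕ)) : Multiset (Finset ℕ) :=
  (S.filter (fun U => x ∉ U)) + {(S.filter (fun U => x ∈ U)).sup \ ({x} : Finset ℕ)}

/-- The multiset `mset_𝒯` of a holey formula under an association `a`. -/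
def msetT (a : ℕ → Finset ℕ) : Holey → Multiset (Finset ℕ)
  | .hole i => {a i}
  | .conj f g => msetT a f + msetT a g
  | .disj f g => msetT a f + msetT a g
  | .ex x f => joinVar x (msetT a f)
  | .all x f => joinVar x (msetT a f)

end WidthPaper

open WidthPaper WidthPaper.PFO in
lemma WidthPaper.atomCount_pos : ∀ f : PFO, 1 ≤ atomCount f := by
  intro f; induction f <;> simp [atomCount] <;> omega

open WidthPaper WidthPaper.PFO in
lemma WidthPaper.step_atomCount {r : PFO → PFO → Prop}
    (h : ∀ f g, r f g → atomCount f = atomCount g) :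
    ∀ {f g}, Step r f g → atomCount f = atomCount g := by
  intro f g hs
  induction hs with
  | root hr => exact h _ _ hr
  | _ => simp_all [atomCount]

open WidthPaper WidthPaper.PFO in
lemma WidthPaper.step_pot_eq {r : PFO → PFO → Prop}
    (hA : ∀ f g, r f g → atomCount f = atomCount g)
    (hP : ∀ f g, r f g → pot f = pot g) :
    ∀ {f g}, Step r f g → pot f = pot g := by
  intro f g hs
  induction hs with
  | root hr => exact hP _ _ hr
  | exC hs ih => simp [pot, atomCount, WidthPaper.step_atomCount hA hs, ih]
  | allC hs ih => simp [pot, atomCount, WidthPaper.step_atomCount hA hs, ih]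
  | _ => simp_all [pot]

open WidthPaper WidthPaper.PFO in
lemma WidthPaper.step_pot_lt {r : PFO → PFO → Prop}
    (hA : ∀ f g, r f g → atomCount f = atomCount g)
    (hP : ∀ f g, r f g → pot g < pot f) :
    ∀ {f g}, Step r f g → pot g < pot f := by
  intro f g hs
  induction hs with
  | root hr => exact hP _ _ hr
  | exC hs ih => simp only [pot, atomCount, WidthPaper.step_atomCount hA hs]; omega
  | allC hs ih => simp only [pot, atomCount, WidthPaper.step_atomCount hA hs]; omega
  | _ => simp_all only [pot]; omega

open WidthPaper WidthPaper.PFO in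
lemma WidthPaper.rpd_pot : ∀ f g : PFO, RPd f g → pot g < pot f := by
  intro φ ψ h
  cases h with
  | ex x f g hx | all x f g hx =>
    simp only [pot, atomCount]
    have h1 := WidthPaper.atomCount_pos f
    have h2 := WidthPaper.atomCount_pos g
    have h3 : atomCount f ^ 2 < (atomCount f + atomCount g) ^ 2 :=
      Nat.pow_lt_pow_left (by omega) (by norm_num)
    omega

open WidthPaper WidthPaper.PFO in
lemma WidthPaper.rsd_pot : ∀ f g : PFO, RSd f g → pot g < pot f := by
  intro φ ψ h
  cases h with
  | ex x f g | all x f g =>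
    simp only [pot, atomCount]
    have h1 := WidthPaper.atomCount_pos f
    have h2 := WidthPaper.atomCount_pos g
    have h3 : (atomCount f + atomCount g) ^ 2 =
        atomCount f ^ 2 + atomCount g ^ 2 + 2 * (atomCount f * atomCount g) := by ring
    have h4 : 1 ≤ atomCount f * atomCount g := Nat.one_le_iff_ne_zero.mpr (by positivity)
    omega

open WidthPaper WidthPaper.PFO in
lemma WidthPaper.rm_pot : ∀ f g : PFO, RM f g → pot g < pot f := by
  intro φ ψ h
  cases h with
  | ex x f hx | all x f hx =>
    simp only [pot, atomCount]
    have h1 := WidthPaper.atomCount_pos ψ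
    have h2 : 1 ≤ atomCount ψ ^ 2 := Nat.one_le_iff_ne_zero.mpr (by positivity)
    omega

open WidthPaper WidthPaper.PFO in
/-- the potential `p(φ) = Σ_F a(F)²` (sum over quantifier-rooted
subformula occurrences of the squared atom count) is invariant under the rules A, C, O,
strictly decreases under the rules P↓, S↓, M, and is bounded by `|φ|³`. -/
theorem potential_properties :
    (∀ f g : PFO, Step RA f g ∨ Step RC f g ∨ Step RO f g → pot f = pot g) ∧
    (∀ f g : PFO, Step RPd f g ∨ Step RSd f g ∨ Step RM f g → pot g < pot f) ∧
    (∀ f : PFO, pot f ≤ size f ^ 3) := by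
  refine ⟨?_, ?_, ?_⟩
  · rintro f g (h | h | h)
    · refine WidthPaper.step_pot_eq ?_ ?_ h <;> rintro f g (_ | _ | _ | _) <;>
        simp [atomCount, pot] <;> ring
    · refine WidthPaper.step_pot_eq ?_ ?_ h <;> rintro f g (_ | _) <;>
        simp [atomCount, pot] <;> ring
    · refine WidthPaper.step_pot_eq ?_ ?_ h <;> rintro f g (_ | _) <;>
        simp [atomCount, pot] <;> ring
  · rintro f g (h | h | h)
    · exact WidthPaper.step_pot_lt
        (by rintro f g (_ | _) <;> simp [atomCount] <;> ring)
        WidthPaper.rpd_pot h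
    · exact WidthPaper.step_pot_lt
        (by rintro f g (_ | _) <;> simp [atomCount] <;> ring)
        WidthPaper.rsd_pot h
    · exact WidthPaper.step_pot_lt
        (by rintro f g (_ | _) <;> simp [atomCount])
        WidthPaper.rm_pot h
  · intro f
    have hac : ∀ f : PFO, atomCount f ≤ size f := by
      intro f; induction f <;> simp [atomCount, size] <;> omega
    induction f with
    | atom r vs => simp [pot, size]
    | conj f g ihf ihg =>
        simp only [pot, size]
        have h : (size f + size g + 1) ^ 3 = size f ^ 3 + size g ^ 3 +
            (3 * size f ^ 2 * size g + 3 * size f * size g ^ 2 + 3 * size f ^ 2 +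
             3 * size g ^ 2 + 6 * size f * size g + 3 * size f + 3 * size g + 1) := by ring
        omega
    | disj f g ihf ihg =>
        simp only [pot, size]
        have h : (size f + size g + 1) ^ 3 = size f ^ 3 + size g ^ 3 +
            (3 * size f ^ 2 * size g + 3 * size f * size g ^ 2 + 3 * size f ^ 2 +
             3 * size g ^ 2 + 6 * size f * size g + 3 * size f + 3 * size g + 1) := by ring
        omega
    | ex x f ih =>
        simp only [pot, size, atomCount]
        have h1 : atomCount f ^ 2 ≤ size f ^ 2 := Nat.pow_le_pow_left (hac f) 2
        have h : (size f + 1) ^ 3 = size f ^ 3 + size f ^ 2 +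
            (2 * size f ^ 2 + 3 * size f + 1) := by ring
        omega
    | all x f ih =>
        simp only [pot, size, atomCount]
        have h1 : atomCount f ^ 2 ≤ size f ^ 2 := Nat.pow_le_pow_left (hac f) 2
        have h : (size f + 1) ^ 3 = size f ^ 3 + size f ^ 2 +
            (2 * size f ^ 2 + 3 * size f + 1) := by ring
        omega
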